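/- arXiv:2312.00983 — 4 statements merged into one kernel-verified Lean document; each statement's English description precedes it below -/
import Mathlib

section
/- Under the stated setup, assume that n_1, …, n_ℓ are pairwise coprime and that G has no pseudo-reflection. Then for every character 𝒳 of G the semi-invariant module R^𝒳 is nonzero, and the trace of R^𝒳 satisfies tr_{R^G}(R^𝒳) = R^𝒳 · R^{𝒳^{-1}}, the ideal of R^G generated by all products of an element of R^𝒳 with an element of R^{𝒳^{-1}}. -/
open MvPolynomial

set_option synthInstance.maxHeartbeats 1000000
set_option maxHeartbeats 1000000

noncomputable section

/-- The trace ideal of a module `M` over a commutative ring `A`: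
the sum of images of all `A`-linear maps `M → A`. -/
def traceIdeal (A : Type*) [CommRing A] (M : Type*) [AddCommGroup M] [Module A M] :
    Ideal A :=
  ⨆ f : M →ₗ[A] A, LinearMap.range f

variable {K : Type} [Field K] {d : ℕ}

/-- The subgroup of `K`-algebra automorphisms of `K[X_1,…,X_d]` generated
by a family `σ`. -/
def Ggen {ℓ : ℕ} (σ : Fin ℓ → (MvPolynomial (Fin d) K ≃ₐ[K] MvPolynomial (Fin d) K)) :
    Subgroup (MvPolynomial (Fin d) K ≃ₐ[K] MvPolynomial (Fin d) K) :=
  Subgroup.closure (Set.range σ)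

/-- The ring of invariants `R^G`, as a subalgebra of `R = K[X_1,…,X_d]`. -/
def invariants (G : Subgroup (MvPolynomial (Fin d) K ≃ₐ[K] MvPolynomial (Fin d) K)) :
    Subalgebra K (MvPolynomial (Fin d) K) where
  carrier := {a | ∀ g ∈ G, g a = a}
  mul_mem' := fun ha hb g hg => by rw [map_mul, ha g hg, hb g hg]
  one_mem' := fun g hg => map_one _
  add_mem' := fun ha hb g hg => by rw [map_add, ha g hg, hb g hg]
  zero_mem' := fun g hg => map_zero _
  algebraMap_mem' := fun r g hg => AlgEquiv.commutes g r

/-- The semi-invariants `R^𝒳` of weight a character `𝒳 : G → Kˣ`, as an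
`R^G`-submodule of `R`. -/
def semiInvariants (G : Subgroup (MvPolynomial (Fin d) K ≃ₐ[K] MvPolynomial (Fin d) K))
    (χ : G →* Kˣ) : Submodule (invariants G) (MvPolynomial (Fin d) K) where
  carrier := {a | ∀ g : G, (g : MvPolynomial (Fin d) K ≃ₐ[K] MvPolynomial (Fin d) K) a
      = (χ g : K) • a}
  add_mem' := fun ha hb g => by rw [map_add, ha g, hb g, smul_add]
  zero_mem' := fun g => by rw [map_zero, smul_zero]
  smul_mem' := fun s a ha g => by
    have h1 : (s • a : MvPolynomial (Fin d) K) = (s : MvPolynomial (Fin d) K) * a := rfl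
    rw [h1, map_mul, s.2 g g.2, ha g, mul_smul_comm]

/-- The ideal `N₁ · N₂` of `R^G` generated by all products of an element of `N₁`
with an element of `N₂`, for `R^G`-submodules `N₁, N₂` of `R`. -/
def prodIdeal (G : Subgroup (MvPolynomial (Fin d) K ≃ₐ[K] MvPolynomial (Fin d) K))
    (N₁ N₂ : Submodule (invariants G) (MvPolynomial (Fin d) K)) : Ideal (invariants G) :=
  Ideal.span {a : invariants G | ∃ f ∈ N₁, ∃ h ∈ N₂, (a : MvPolynomial (Fin d) K) = f * h}

/-- A (diagonalizable) algebra automorphism of `K[X_1,…,X_d]` is a pseudo-reflection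
if it scales each variable and its eigenspace for the eigenvalue `1` on `K^d`
has dimension `d - 1`, i.e. exactly `d - 1` of the scaling factors equal `1`. -/
def IsPseudoReflection (g : MvPolynomial (Fin d) K ≃ₐ[K] MvPolynomial (Fin d) K) : Prop :=
  ∃ c : Fin d → K, (∀ j, g (X j) = c j • X j) ∧
    Nat.card {j : Fin d // c j = 1} = d - 1

/-!
A monomial `x^a` is semi-invariant of weight `σ_i ↦ ξ_i^{∑_k t_ik a_k}`. By Bézout and the Chinese
remainder theorem (the `n_i` being pairwise coprime) every character is such a weight, even of a
monomial avoiding any prescribed variable `X_j`: without pseudo-reflections, `gcd(t_ik : k ≠ j)`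
stays coprime to `n_i`.

For an `R^G`-linear `φ : R^χ → R^G` one has `z φ(y) = y φ(z)` on `R^χ`. So if `x^b ∈ R^χ`, then
`x^b` divides `x^{c_j} φ(x^b)` for monomials `x^{c_j} ∈ R^χ` free of `X_j`, hence divides
`φ(x^b)`; the quotient `q` lies in `R^{χ⁻¹}` and `φ` is multiplication by `q`.
-/

lemma Finset.natCast_gcd {κ : Type*} (s : Finset κ) (t : κ → ℕ) :
    ((s.gcd t : ℕ) : ℤ) = s.gcd fun k => (t k : ℤ) := by
  classical
  induction s using Finset.induction with
  | empty => simp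
  | insert a s ha ih =>
    rw [Finset.gcd_insert, Finset.gcd_insert, ← ih, ← Int.coe_gcd, Int.gcd_natCast_natCast]
    rfl

lemma exists_sum_mul_eq_of_coprime_gcd {κ : Type*} [Fintype κ] (s : Finset κ) (t : κ → ℕ)
    {n : ℕ} (h : Nat.Coprime (s.gcd t) n) (m : ZMod n) :
    ∃ u : κ → ZMod n, (∀ k ∉ s, u k = 0) ∧ ∑ k, (t k : ZMod n) * u k = m := by
  classical
  obtain ⟨g, hg⟩ := s.gcd_eq_sum_mul fun k => (t k : ℤ)
  obtain ⟨x, y, hxy⟩ := Nat.isCoprime_iff_coprime.mpr h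
  refine ⟨fun k => if k ∈ s then (g k * x : ℤ) * m else 0, fun k hk => if_neg hk, ?_⟩
  have hxy' := congrArg (Int.cast : ℤ → ZMod n) hxy
  rw [Finset.natCast_gcd, hg] at hxy'
  push_cast [ZMod.natCast_self, mul_zero, add_zero] at hxy'
  simp only [mul_ite, mul_zero, Finset.sum_ite_mem, Finset.univ_inter]
  calc ∑ k ∈ s, (t k : ZMod n) * ((g k * x : ℤ) * m)
      = ((∑ k ∈ s, (t k : ZMod n) * g k) * x) * m := by
        rw [Finset.sum_mul, Finset.sum_mul]
        push_cast
        exact Finset.sum_congr rfl fun _ _ => by ring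
    _ = m := by rw [mul_comm _ (x : ZMod n), hxy', one_mul]

open Function in
lemma exists_sum_mul_modEq {ι κ : Type*} [Fintype ι] [Fintype κ] {n : ι → ℕ}
    (hn : ∀ i, n i ≠ 0) (hcop : Pairwise (Nat.Coprime on n)) (t : ι → κ → ℕ) (s : Finset κ)
    (hs : ∀ i, Nat.Coprime (s.gcd (t i)) (n i)) (m : ι → ℕ) :
    ∃ a : κ → ℕ, (∀ k ∉ s, a k = 0) ∧ ∀ i, ∑ k, t i k * a k ≡ m i [MOD n i] := by
  have : NeZero (∏ i, n i) := ⟨Finset.prod_ne_zero_iff.mpr fun i _ => hn i⟩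
  choose u hu0 hu using fun i => exists_sum_mul_eq_of_coprime_gcd s (t i) (hs i) (m i)
  let crt := (ZMod.prodEquivPi n hcop).symm
  refine ⟨fun k => (crt fun i => u i k).val, fun k hk => ?_, fun i => ?_⟩
  · simp [hu0 _ k hk, ← Pi.zero_def]
  · have : NeZero (n i) := ⟨hn i⟩
    rw [← ZMod.natCast_eq_natCast_iff, ← hu i]
    push_cast [ZMod.natCast_val]
    refine Finset.sum_congr rfl fun k _ => congrArg _ ?_
    rw [← ZMod.castHom_apply, ← ZMod.prodEquivPi_apply n hcop, RingEquiv.apply_symm_apply]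
    exact Finset.dvd_prod_of_mem n (Finset.mem_univ i)

lemma monomial_one_dvd_iff_forall_le {σ R : Type*} [CommSemiring R] {s : σ →₀ ℕ}
    {p : MvPolynomial σ R} : monomial s 1 ∣ p ↔ ∀ m ∈ p.support, s ≤ m := by
  rw [monomial_one_dvd_iff_modMonomial_eq_zero, MvPolynomial.ext_iff]
  refine ⟨fun h m hm => ?_, fun h m => ?_⟩
  · by_contra hle
    exact mem_support_iff.mp hm (by rw [← coeff_modMonomial_of_not_le p hle, h, coeff_zero])
  · by_cases hle : s ≤ m
    · rw [coeff_modMonomial_of_le p hle, coeff_zero]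
    · rw [coeff_modMonomial_of_not_le p hle, coeff_zero]
      exact notMem_support_iff.mp fun hm => hle (h m hm)

lemma monomial_one_dvd_of_forall_dvd_monomial_mul {σ R : Type*} [CommSemiring R]
    {b : σ →₀ ℕ} {p : MvPolynomial σ R} (c : σ → σ →₀ ℕ) (hc : ∀ j, c j j = 0)
    (h : ∀ j, monomial b 1 ∣ monomial (c j) 1 * p) : monomial b 1 ∣ p := by
  refine monomial_one_dvd_iff_forall_le.mpr fun m hm j => ?_
  have hmem : c j + m ∈ (monomial (c j) 1 * p).support := by
    rwa [mem_support_iff, coeff_monomial_mul, one_mul, ← mem_support_iff]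
  simpa [hc j] using monomial_one_dvd_iff_forall_le.mp (h j) _ hmem j

lemma AlgHom.map_monomial_one_of_map_X {σ R : Type*} [Fintype σ] [CommSemiring R]
    (g : MvPolynomial σ R →ₐ[R] MvPolynomial σ R) (c : σ → R) (hg : ∀ j, g (X j) = c j • X j)
    (a : σ →₀ ℕ) : g (monomial a 1) = (∏ j, c j ^ a j) • monomial a 1 := by
  simp only [monomial_eq, C_1, one_mul, Finsupp.prod_fintype _ _ (fun _ => pow_zero _), map_prod,
    map_pow, hg, smul_pow, Finset.prod_smul]

lemma AlgEquiv.pow_apply_of_apply_eq_smul {R A : Type*} [CommSemiring R] [Semiring A]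
    [Algebra R A] (g : A ≃ₐ[R] A) {x : A} {c : R} (h : g x = c • x) (e : ℕ) :
    (g ^ e) x = c ^ e • x := by
  induction e with
  | zero => simp
  | succ e ih => rw [pow_succ', AlgEquiv.mul_apply, ih, map_smul, h, smul_smul, ← pow_succ]

section SemiInvariants

variable {G : Subgroup (MvPolynomial (Fin d) K ≃ₐ[K] MvPolynomial (Fin d) K)} {χ ψ : G →* Kˣ}
  {a b : MvPolynomial (Fin d) K}

lemma mul_mem_semiInvariants (ha : a ∈ semiInvariants G χ) (hb : b ∈ semiInvariants G ψ) :
    a * b ∈ semiInvariants G (χ * ψ) := fun g => by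
  rw [map_mul, ha g, hb g, smul_mul_smul_comm, MonoidHom.mul_apply, Units.val_mul]

lemma pow_mem_semiInvariants (ha : a ∈ semiInvariants G χ) (k : ℕ) :
    a ^ k ∈ semiInvariants G (χ ^ k) := by
  induction k with
  | zero => exact fun g => by simp
  | succ k ih => rw [pow_succ, pow_succ χ]; exact mul_mem_semiInvariants ih ha

lemma mem_semiInvariants_one_iff : a ∈ semiInvariants G 1 ↔ a ∈ invariants G :=
  ⟨fun h g hg => by simpa using h ⟨g, hg⟩, fun h g => by simpa using h g g.2⟩

lemma mem_semiInvariants_of_mul_mem (ha : a ∈ semiInvariants G χ) (ha0 : a ≠ 0)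
    (hab : a * b ∈ semiInvariants G (χ * ψ)) : b ∈ semiInvariants G ψ := fun g => by
  have h := hab g
  rw [map_mul, ha g, MonoidHom.mul_apply, Units.val_mul, mul_smul, smul_mul_assoc] at h
  exact mul_left_cancel₀ ha0 ((smul_right_inj (χ g).ne_zero).mp (by rw [h, mul_smul_comm]))

lemma mul_mem_invariants (ha : a ∈ semiInvariants G χ) (hb : b ∈ semiInvariants G χ⁻¹) :
    a * b ∈ invariants G :=
  mem_semiInvariants_one_iff.mp (mul_inv_cancel χ ▸ mul_mem_semiInvariants ha hb)

def mulSemiInvariants (h : semiInvariants G χ⁻¹) :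
    semiInvariants G χ →ₗ[invariants G] invariants G where
  toFun v := ⟨v * h, mul_mem_invariants v.2 h.2⟩
  map_add' v w := Subtype.ext (add_mul (v : MvPolynomial (Fin d) K) w h)
  map_smul' s v := Subtype.ext (mul_assoc (s : MvPolynomial (Fin d) K) v h)

lemma prodIdeal_le_traceIdeal :
    prodIdeal G (semiInvariants G χ) (semiInvariants G χ⁻¹) ≤
      traceIdeal (invariants G) (semiInvariants G χ) := by
  refine Ideal.span_le.mpr ?_
  rintro u ⟨v, hv, h, hh, hu⟩
  exact Submodule.mem_iSup_of_mem (mulSemiInvariants ⟨h, hh⟩) ⟨⟨v, hv⟩, Subtype.ext hu.symm⟩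

/-- Multiply by `u = z^{N-1} ∈ R^{χ⁻¹}`, `N` the order of `χ`: then `zu, yu ∈ R^G` and
`(zu) • y = (yu) • z` in `R^χ`. -/
lemma mul_map_comm (hχ : IsOfFinOrder χ)
    (φ : semiInvariants G χ →ₗ[invariants G] invariants G) (y z : semiInvariants G χ) :
    (z : MvPolynomial (Fin d) K) * φ y = y * φ z := by
  by_cases hz : (z : MvPolynomial (Fin d) K) = 0
  · rw [hz, zero_mul, show z = 0 from Subtype.ext hz, map_zero, ZeroMemClass.coe_zero, mul_zero]
  have hinv : χ ^ (orderOf χ - 1) = χ⁻¹ := eq_inv_of_mul_eq_one_left (b := χ)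
    ((pow_sub_one_mul hχ.orderOf_pos.ne' χ).trans (pow_orderOf_eq_one χ))
  set u := (z : MvPolynomial (Fin d) K) ^ (orderOf χ - 1)
  have hu : u ∈ semiInvariants G χ⁻¹ := hinv ▸ pow_mem_semiInvariants z.2 _
  have key : (⟨z * u, mul_mem_invariants z.2 hu⟩ : invariants G) • y
      = (⟨y * u, mul_mem_invariants y.2 hu⟩ : invariants G) • z :=
    Subtype.ext (by simp only [Submodule.coe_smul, Subalgebra.smul_def]; ring)
  have hφ := congrArg (fun v => (φ v : MvPolynomial (Fin d) K)) key
  simp only [map_smul, smul_eq_mul, Subalgebra.coe_mul] at hφ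
  exact mul_left_cancel₀ (pow_ne_zero _ hz : u ≠ 0) (by linear_combination hφ)

lemma traceIdeal_le_prodIdeal (hχ : IsOfFinOrder χ) {b : Fin d →₀ ℕ}
    (hb : monomial b (1 : K) ∈ semiInvariants G χ) (c : Fin d → Fin d →₀ ℕ) (hc : ∀ j, c j j = 0)
    (hcχ : ∀ j, monomial (c j) (1 : K) ∈ semiInvariants G χ) :
    traceIdeal (invariants G) (semiInvariants G χ) ≤
      prodIdeal G (semiInvariants G χ) (semiInvariants G χ⁻¹) := by
  refine iSup_le fun φ => ?_
  let x : semiInvariants G χ := ⟨monomial b 1, hb⟩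
  have hx0 : (x : MvPolynomial (Fin d) K) ≠ 0 := monomial_eq_zero.not.mpr one_ne_zero
  obtain ⟨q, hq⟩ : monomial b 1 ∣ (φ x : MvPolynomial (Fin d) K) :=
    monomial_one_dvd_of_forall_dvd_monomial_mul c hc fun j =>
      ⟨φ ⟨_, hcχ j⟩, mul_map_comm hχ φ x ⟨_, hcχ j⟩⟩
  have hqχ : q ∈ semiInvariants G χ⁻¹ := by
    refine mem_semiInvariants_of_mul_mem hb hx0 ?_
    exact (mul_inv_cancel χ) ▸ hq ▸ mem_semiInvariants_one_iff.mpr (φ x).2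
  rintro _ ⟨v, rfl⟩
  refine Ideal.subset_span ⟨v, v.2, q, hqχ, mul_left_cancel₀ hx0 ?_⟩
  rw [mul_map_comm hχ φ v x, hq]
  ring

end SemiInvariants

section Ggen

variable {ℓ : ℕ} {σ : Fin ℓ → (MvPolynomial (Fin d) K ≃ₐ[K] MvPolynomial (Fin d) K)}

lemma mem_Ggen (i : Fin ℓ) : σ i ∈ Ggen σ := Subgroup.subset_closure ⟨i, rfl⟩

lemma Ggen.hom_ext {M : Type*} [Monoid M] {f f' : Ggen σ →* M}
    (h : ∀ i, f ⟨σ i, mem_Ggen i⟩ = f' ⟨σ i, mem_Ggen i⟩) : f = f' :=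
  MonoidHom.eq_of_eqOn_dense Subgroup.closure_closure_coe_preimage (by
    rintro ⟨_, hg⟩ ⟨i, rfl⟩
    exact h i)

lemma mem_semiInvariants_Ggen {χ : Ggen σ →* Kˣ} {p : MvPolynomial (Fin d) K}
    (h : ∀ i, σ i p = (χ ⟨σ i, mem_Ggen i⟩ : K) • p) : p ∈ semiInvariants (Ggen σ) χ := by
  rintro ⟨g, hg⟩
  induction hg using Subgroup.closure_induction with
  | mem _ hg => obtain ⟨i, rfl⟩ := hg; exact h i
  | one =>
    change (1 : MvPolynomial (Fin d) K ≃ₐ[K] MvPolynomial (Fin d) K) p = (χ 1 : K) • p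
    simp
  | mul g g' hg hg' ih ih' =>
    change (g * g') p = (χ (⟨g, hg⟩ * ⟨g', hg'⟩) : K) • p
    rw [AlgEquiv.mul_apply, ih', map_smul, ih, smul_smul, map_mul, Units.val_mul, mul_comm]
  | inv g hg ih =>
    change g⁻¹ p = (χ ⟨g, hg⟩⁻¹ : K) • p
    rw [map_inv, Units.val_inv_eq_inv_val, eq_inv_smul_iff₀ (χ _).ne_zero, ← map_smul, ← ih,
      AlgEquiv.aut_inv, AlgEquiv.symm_apply_apply]

end Ggen

/-- If `D = gcd(e_k : k ≠ j, N) ≠ 1`, then `g^{N/D}` fixes every `X_k` with `k ≠ j` and moves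
`X_j`: a pseudo-reflection. -/
lemma coprime_gcd_erase_of_not_isPseudoReflection
    {g : MvPolynomial (Fin d) K ≃ₐ[K] MvPolynomial (Fin d) K} {ζ : K} {N : ℕ} (hN : 0 < N)
    (hζ : IsPrimitiveRoot ζ N) {e : Fin d → ℕ} (hg : ∀ j, g (X j) = ζ ^ e j • X j)
    (he : Nat.Coprime (Finset.univ.gcd e) N) (hpr : ∀ r : ℕ, ¬ IsPseudoReflection (g ^ r))
    (j : Fin d) : Nat.Coprime ((Finset.univ.erase j).gcd e) N := by
  by_contra hD
  set D := Nat.gcd ((Finset.univ.erase j).gcd e) N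
  obtain ⟨r, hr⟩ : D ∣ N := Nat.gcd_dvd_right _ _
  have hr0 : 0 < r := Nat.pos_of_mul_pos_left (hr ▸ hN)
  have hdvd : ∀ k, k ≠ j → D ∣ e k := fun k hk =>
    (Nat.gcd_dvd_left _ _).trans (Finset.gcd_dvd (Finset.mem_erase.mpr ⟨hk, Finset.mem_univ k⟩))
  have hfix : ∀ k, (ζ ^ e k) ^ r = 1 ↔ k ≠ j := fun k => by
    rw [← pow_mul, hζ.pow_eq_one_iff_dvd, hr, Nat.mul_dvd_mul_iff_right hr0]
    refine ⟨fun hk hkj => hD ?_, hdvd k⟩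
    have hall : D ∣ Finset.univ.gcd e := Finset.dvd_gcd fun k' _ => by
      by_cases hk' : k' = j
      · exact hk' ▸ hkj ▸ hk
      · exact hdvd k' hk'
    exact Nat.dvd_one.mp (he ▸ Nat.dvd_gcd hall (Nat.gcd_dvd_right _ _))
  refine hpr r ⟨fun k => (ζ ^ e k) ^ r, fun k => AlgEquiv.pow_apply_of_apply_eq_smul g (hg k) r, ?_⟩
  rw [Nat.card_congr (Equiv.subtypeEquivRight hfix)]
  simp

section Diagonal

variable {ℓ : ℕ} {n : Fin ℓ → ℕ} {ξ : Fin ℓ → K} {t : Fin ℓ → Fin d → ℕ}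
  {σ : Fin ℓ → (MvPolynomial (Fin d) K ≃ₐ[K] MvPolynomial (Fin d) K)}

lemma generator_pow_eq_one (hξ : ∀ i, IsPrimitiveRoot (ξ i) (n i))
    (hσ : ∀ i j, σ i (X j) = ξ i ^ t i j • X j) (i : Fin ℓ) :
    (⟨σ i, mem_Ggen i⟩ : Ggen σ) ^ n i = 1 :=
  Subtype.ext <| AlgEquiv.coe_toAlgHom_injective <| algHom_ext fun j => by
    rw [AlgEquiv.coe_toAlgHom, Subgroup.coe_pow, AlgEquiv.pow_apply_of_apply_eq_smul _ (hσ i j),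
      pow_right_comm, (hξ i).pow_eq_one, one_pow, one_smul]
    rfl

lemma isOfFinOrder_character (hn : ∀ i, 0 < n i)
    (hξ : ∀ i, IsPrimitiveRoot (ξ i) (n i)) (hσ : ∀ i j, σ i (X j) = ξ i ^ t i j • X j)
    (χ : Ggen σ →* Kˣ) : IsOfFinOrder χ := by
  refine isOfFinOrder_iff_pow_eq_one.mpr ⟨∏ i, n i, Finset.prod_pos fun i _ => hn i,
    Ggen.hom_ext fun i => ?_⟩
  obtain ⟨k, hk⟩ := Finset.dvd_prod_of_mem n (Finset.mem_univ i)
  rw [MonoidHom.pow_apply, ← map_pow, hk, pow_mul, generator_pow_eq_one hξ hσ i, one_pow, map_one,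
    MonoidHom.one_apply]

open Function in
lemma exists_monomial_mem_semiInvariants (hn : ∀ i, 0 < n i)
    (hξ : ∀ i, IsPrimitiveRoot (ξ i) (n i)) (hσ : ∀ i j, σ i (X j) = ξ i ^ t i j • X j)
    (hcop : Pairwise (Nat.Coprime on n)) (χ : Ggen σ →* Kˣ) (s : Finset (Fin d))
    (hs : ∀ i, Nat.Coprime (s.gcd (t i)) (n i)) :
    ∃ a : Fin d →₀ ℕ, (∀ k ∉ s, a k = 0) ∧ monomial a (1 : K) ∈ semiInvariants (Ggen σ) χ := by
  have : ∀ i, NeZero (n i) := fun i => ⟨(hn i).ne'⟩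
  choose m _ hm using fun i =>
    (hξ i).eq_pow_of_pow_eq_one (ξ := (χ ⟨σ i, mem_Ggen i⟩ : K)) <| by
      rw [← Units.val_pow_eq_pow_val, ← map_pow, generator_pow_eq_one hξ hσ i, map_one,
        Units.val_one]
  obtain ⟨a, has, ha⟩ := exists_sum_mul_modEq (fun i => (hn i).ne') hcop t s hs m
  refine ⟨Finsupp.equivFunOnFinite.symm a, fun k hk => has k hk,
    mem_semiInvariants_Ggen fun i => ?_⟩
  have hσi : ∀ j, (σ i : MvPolynomial (Fin d) K →ₐ[K] MvPolynomial (Fin d) K) (X j)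
      = ξ i ^ t i j • X j := hσ i
  rw [← AlgEquiv.coe_toAlgHom, AlgHom.map_monomial_one_of_map_X _ _ hσi, ← hm i]
  congr 1
  simp only [Finsupp.coe_equivFunOnFinite_symm, ← pow_mul, Finset.prod_pow_eq_pow_sum]
  exact ((hξ i).isOfFinOrder (hn i).ne').pow_eq_pow_iff_modEq.mpr ((hξ i).eq_orderOf ▸ ha i)

end Diagonal

theorem statement0_general {ℓ : ℕ}
    (n : Fin ℓ → ℕ) (hn : ∀ i, 0 < n i)
    (ξ : Fin ℓ → K) (hξ : ∀ i, IsPrimitiveRoot (ξ i) (n i))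
    (t : Fin ℓ → Fin d → ℕ)
    (hgcd : ∀ i, Nat.gcd (Finset.univ.gcd (t i)) (n i) = 1)
    (σ : Fin ℓ → (MvPolynomial (Fin d) K ≃ₐ[K] MvPolynomial (Fin d) K))
    (hσ : ∀ i j, σ i (X j) = ξ i ^ t i j • X j)
    (hcop : ∀ i i', i ≠ i' → Nat.Coprime (n i) (n i'))
    (hpr : ∀ g ∈ Ggen σ, ¬ IsPseudoReflection g)
    (χ : Ggen σ →* Kˣ) :
    semiInvariants (Ggen σ) χ ≠ ⊥ ∧
      traceIdeal (invariants (Ggen σ)) (semiInvariants (Ggen σ) χ) =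
        prodIdeal (Ggen σ) (semiInvariants (Ggen σ) χ) (semiInvariants (Ggen σ) χ⁻¹) := by
  obtain ⟨b, -, hb⟩ := exists_monomial_mem_semiInvariants hn hξ hσ hcop χ Finset.univ hgcd
  have hfree (j : Fin d) :
      ∃ c : Fin d →₀ ℕ, c j = 0 ∧ monomial c (1 : K) ∈ semiInvariants (Ggen σ) χ := by
    have hs (i : Fin ℓ) := coprime_gcd_erase_of_not_isPseudoReflection (hn i) (hξ i) (hσ i)
      (hgcd i) (fun r => hpr _ (pow_mem (mem_Ggen i) r)) j
    obtain ⟨c, hcj, hc⟩ := exists_monomial_mem_semiInvariants hn hξ hσ hcop χ _ hs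
    exact ⟨c, hcj j (by simp), hc⟩
  choose c hcj hc using hfree
  refine ⟨(Submodule.ne_bot_iff _).mpr ⟨_, hb, monomial_eq_zero.not.mpr one_ne_zero⟩, ?_⟩
  exact le_antisymm
    (traceIdeal_le_prodIdeal (isOfFinOrder_character hn hξ hσ χ) hb c hcj hc)
    prodIdeal_le_traceIdeal

/-- Theorem 3.8: if `n_1, …, n_ℓ` are pairwise coprime and `G` has no pseudo-reflection,
then every semi-invariant module `R^𝒳` is nonzero and
`tr_{R^G}(R^𝒳) = R^𝒳 · R^{𝒳⁻¹}`. -/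
theorem statement0 [IsAlgClosed K] {ℓ : ℕ} (hd : 2 ≤ d) (hℓ : 1 ≤ ℓ)
    (n : Fin ℓ → ℕ) (hn : ∀ i, 0 < n i) (hchar : ∀ i, (n i : K) ≠ 0)
    (ξ : Fin ℓ → K) (hξ : ∀ i, IsPrimitiveRoot (ξ i) (n i))
    (t : Fin ℓ → Fin d → ℕ)
    (hgcd : ∀ i, Nat.gcd (Finset.univ.gcd (t i)) (n i) = 1)
    (σ : Fin ℓ → (MvPolynomial (Fin d) K ≃ₐ[K] MvPolynomial (Fin d) K))
    (hσ : ∀ i j, σ i (X j) = ξ i ^ t i j • X j)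
    (hcop : ∀ i i', i ≠ i' → Nat.Coprime (n i) (n i'))
    (hpr : ∀ g ∈ Ggen σ, ¬ IsPseudoReflection g)
    (χ : Ggen σ →* Kˣ) :
    semiInvariants (Ggen σ) χ ≠ ⊥ ∧
      traceIdeal (invariants (Ggen σ)) (semiInvariants (Ggen σ) χ) =
        prodIdeal (Ggen σ) (semiInvariants (Ggen σ) χ) (semiInvariants (Ggen σ) χ⁻¹) :=
  statement0_general n hn ξ hξ t hgcd σ hσ hcop hpr χ

end
end

section
/- Under the stated setup, for every character 𝒳 of G the inclusion R^G :_{S^{-1}R} R^𝒳 ⊇ R^{𝒳^{-1}} holds. Moreover, if the only elements of R dividing every element of R^𝒳 are the nonzero constants (equivalently, there are finitely many elements of R^𝒳 whose greatest common divisor is 1), then R^G :_{S^{-1}R} R^𝒳 = R^{𝒳^{-1}}. -/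
/-! If `α` lies in the colon, then `α f ∈ R` for every `f ∈ R^𝒳`. Writing `α` in lowest terms
in the UFD `R`, its denominator divides every element of `R^𝒳`, so it is a unit once
`gcd(R^𝒳) = 1`, and `α ∈ R`. Multiplying `α` by a nonzero `f ∈ R^𝒳` (there is one, as `0` is not
a unit) gives an invariant, which forces `α` to have weight `𝒳⁻¹`; conversely weights multiply,
so `R^{𝒳⁻¹} R^𝒳 ⊆ R^G`. -/

open MvPolynomial

set_option synthInstance.maxHeartbeats 1000000
set_option maxHeartbeats 1000000

noncomputable section

variable {K : Type} [Field K] {d : ℕ}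

/-- Membership in `S⁻¹R ⊆ Q(R)`, where `S = R^G ∖ {0}`: those elements of the fraction
field of `R` that can be written with a denominator which is a nonzero invariant. -/
def memSinvR (G : Subgroup (MvPolynomial (Fin d) K ≃ₐ[K] MvPolynomial (Fin d) K))
    (α : FractionRing (MvPolynomial (Fin d) K)) : Prop :=
  ∃ s : invariants G, s ≠ 0 ∧ ∃ r : MvPolynomial (Fin d) K,
    α * algebraMap (MvPolynomial (Fin d) K) (FractionRing (MvPolynomial (Fin d) K))
      (s : MvPolynomial (Fin d) K) =
      algebraMap (MvPolynomial (Fin d) K) (FractionRing (MvPolynomial (Fin d) K)) r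

/-- The colon `R^G :_{S⁻¹R} R^𝒳 = {α ∈ S⁻¹R : α·R^𝒳 ⊆ R^G}`, as a subset of the
fraction field of `R`. -/
def colonSet (G : Subgroup (MvPolynomial (Fin d) K ≃ₐ[K] MvPolynomial (Fin d) K))
    (χ : G →* Kˣ) : Set (FractionRing (MvPolynomial (Fin d) K)) :=
  {α | memSinvR G α ∧ ∀ f ∈ semiInvariants G χ, ∃ a : invariants G,
    α * algebraMap (MvPolynomial (Fin d) K) (FractionRing (MvPolynomial (Fin d) K)) f =
      algebraMap (MvPolynomial (Fin d) K) (FractionRing (MvPolynomial (Fin d) K))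
        (a : MvPolynomial (Fin d) K)}

namespace IsFractionRing

theorem isInteger_of_forall_isInteger_mul {A F : Type*} [CommRing A] [IsDomain A]
    [UniqueFactorizationMonoid A] [Field F] [Algebra A F] [IsFractionRing A F] {M : Set A}
    (hM : ∀ b : A, (∀ f ∈ M, b ∣ f) → IsUnit b) {x : F}
    (hx : ∀ f ∈ M, IsLocalization.IsInteger A (x * algebraMap A F f)) :
    IsLocalization.IsInteger A x := by
  refine isInteger_of_isUnit_den (hM _ fun f hf => ?_)
  obtain ⟨a, ha⟩ := hx f hf
  have hden : algebraMap A F (den A x) ≠ 0 :=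
    IsFractionRing.to_map_ne_zero_of_mem_nonZeroDivisors (den A x).2
  have hx' : x * algebraMap A F (den A x) = algebraMap A F (num A x) :=
    (eq_div_iff hden).mp (mk'_num_den' A x).symm
  have hnum : num A x * f = den A x * a := by
    apply IsFractionRing.injective A F
    rw [map_mul, map_mul, ha, ← hx']
    ring
  exact (num_den_reduced A x).symm.dvd_of_dvd_mul_left ⟨a, hnum⟩

end IsFractionRing

section SemiInvariants

variable {G : Subgroup (MvPolynomial (Fin d) K ≃ₐ[K] MvPolynomial (Fin d) K)} {χ : G →* Kˣ}

local notation "R" => MvPolynomial (Fin d) K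

theorem mul_mem_invariants_of_mem_semiInvariants {f h : R}
    (hf : f ∈ semiInvariants G χ⁻¹) (hh : h ∈ semiInvariants G χ) :
    f * h ∈ invariants G := fun g hg => by
  rw [map_mul, hf ⟨g, hg⟩, hh ⟨g, hg⟩, smul_mul_smul_comm, MonoidHom.inv_apply,
    Units.val_inv_eq_inv_val, inv_mul_cancel₀ (Units.ne_zero _), one_smul]

theorem mem_semiInvariants_inv_of_mul_mem_invariants {q f : R}
    (hf : f ∈ semiInvariants G χ) (hf0 : f ≠ 0) (hqf : q * f ∈ invariants G) :
    q ∈ semiInvariants G χ⁻¹ := fun g => by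
  rw [MonoidHom.inv_apply, Units.val_inv_eq_inv_val, eq_inv_smul_iff₀ (Units.ne_zero _)]
  apply mul_right_cancel₀ hf0
  rw [smul_mul_assoc, ← mul_smul_comm, ← hf g, ← map_mul]
  exact hqf g g.2

theorem algebraMap_mem_colonSet {f : R} (hf : f ∈ semiInvariants G χ⁻¹) :
    algebraMap R (FractionRing R) f ∈ colonSet G χ :=
  ⟨⟨1, one_ne_zero, f, by simp⟩, fun h hh =>
    ⟨⟨f * h, mul_mem_invariants_of_mem_semiInvariants hf hh⟩, (map_mul _ _ _).symm⟩⟩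

theorem exists_ne_zero_mem_semiInvariants
    (hgcd : ∀ b : R, (∀ f ∈ semiInvariants G χ, b ∣ f) → ∃ c : K, c ≠ 0 ∧ b = C c) :
    ∃ f ∈ semiInvariants G χ, f ≠ 0 := by
  by_contra! h
  obtain ⟨c, hc, h0⟩ := hgcd 0 fun f hf => by rw [h f hf]
  exact hc (C_injective _ _ (h0.symm.trans C_0.symm))

theorem colonSet_eq_image_semiInvariants_inv
    (hgcd : ∀ b : R, (∀ f ∈ semiInvariants G χ, b ∣ f) → ∃ c : K, c ≠ 0 ∧ b = C c) :
    colonSet G χ = algebraMap R (FractionRing R) '' (semiInvariants G χ⁻¹ : Set R) := by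
  refine Set.Subset.antisymm (fun α ⟨_, hcol⟩ => ?_) ?_
  · obtain ⟨q, rfl⟩ : IsLocalization.IsInteger R α := by
      refine IsFractionRing.isInteger_of_forall_isInteger_mul (M := semiInvariants G χ)
        (fun b hb => ?_) fun f hf => ?_
      · obtain ⟨c, hc, rfl⟩ := hgcd b hb
        exact (isUnit_iff_ne_zero.mpr hc).map C
      · obtain ⟨a, ha⟩ := hcol f hf
        exact ⟨a, ha.symm⟩
    obtain ⟨f, hf, hf0⟩ := exists_ne_zero_mem_semiInvariants hgcd
    obtain ⟨a, ha⟩ := hcol f hf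
    have hqf : q * f = a := IsFractionRing.injective R (FractionRing R) (by rw [map_mul, ha])
    exact ⟨q, mem_semiInvariants_inv_of_mul_mem_invariants hf hf0 (hqf ▸ a.2), rfl⟩
  · rintro _ ⟨f, hf, rfl⟩
    exact algebraMap_mem_colonSet hf

end SemiInvariants

theorem statement3_general {ℓ : ℕ}
    (σ : Fin ℓ → (MvPolynomial (Fin d) K ≃ₐ[K] MvPolynomial (Fin d) K))
    (χ : Ggen σ →* Kˣ) :
    (∀ f ∈ semiInvariants (Ggen σ) χ⁻¹,
      algebraMap (MvPolynomial (Fin d) K) (FractionRing (MvPolynomial (Fin d) K)) f ∈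
        colonSet (Ggen σ) χ) ∧
    ((∀ b : MvPolynomial (Fin d) K,
        (∀ f ∈ semiInvariants (Ggen σ) χ, b ∣ f) → ∃ c : K, c ≠ 0 ∧ b = C c) →
      colonSet (Ggen σ) χ =
        (algebraMap (MvPolynomial (Fin d) K) (FractionRing (MvPolynomial (Fin d) K))) ''
          (semiInvariants (Ggen σ) χ⁻¹ : Set (MvPolynomial (Fin d) K))) :=
  ⟨fun _ => algebraMap_mem_colonSet, colonSet_eq_image_semiInvariants_inv⟩

/-- Proposition 3.3: `R^G :_{S⁻¹R} R^𝒳 ⊇ R^{𝒳⁻¹}` always holds; and if the only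
elements of `R` dividing every element of `R^𝒳` are the nonzero constants
(i.e. `gcd(R^𝒳) = 1`), then `R^G :_{S⁻¹R} R^𝒳 = R^{𝒳⁻¹}`. -/
theorem statement3 [IsAlgClosed K] {ℓ : ℕ} (hd : 2 ≤ d) (hℓ : 1 ≤ ℓ)
    (n : Fin ℓ → ℕ) (hn : ∀ i, 0 < n i) (hchar : ∀ i, (n i : K) ≠ 0)
    (ξ : Fin ℓ → K) (hξ : ∀ i, IsPrimitiveRoot (ξ i) (n i))
    (t : Fin ℓ → Fin d → ℕ)
    (hgcd : ∀ i, Nat.gcd (Finset.univ.gcd (t i)) (n i) = 1)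
    (σ : Fin ℓ → (MvPolynomial (Fin d) K ≃ₐ[K] MvPolynomial (Fin d) K))
    (hσ : ∀ i j, σ i (X j) = ξ i ^ t i j • X j)
    (χ : Ggen σ →* Kˣ) :
    (∀ f ∈ semiInvariants (Ggen σ) χ⁻¹,
      algebraMap (MvPolynomial (Fin d) K) (FractionRing (MvPolynomial (Fin d) K)) f ∈
        colonSet (Ggen σ) χ) ∧
    ((∀ b : MvPolynomial (Fin d) K,
        (∀ f ∈ semiInvariants (Ggen σ) χ, b ∣ f) → ∃ c : K, c ≠ 0 ∧ b = C c) →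
      colonSet (Ggen σ) χ =
        (algebraMap (MvPolynomial (Fin d) K) (FractionRing (MvPolynomial (Fin d) K))) ''
          (semiInvariants (Ggen σ) χ⁻¹ : Set (MvPolynomial (Fin d) K))) :=
  statement3_general σ χ

end
end

section
/- Under the stated setup, assume that n_1, …, n_ℓ are pairwise coprime and that G has no pseudo-reflection. Then for every j with 1 ≤ j ≤ d there exist positive integers c_k for k ∈ {1,…,d} ∖ {j} such that the monomial ∏_{k ≠ j} X_k^{c_k} belongs to R^{(1,1,…,1)}, the semi-invariants of the character 𝒳 with 𝒳(σ_i) = ξ_i for all i. -/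
/-! If a prime `p` divided `n_i` and every `t_{ik}` with `k ≠ j`, then `σ_i ^ (n_i / p)` would fix
each `X_k` with `k ≠ j` but not `X_j` (as `p ∤ t_{ij}` by the gcd condition), i.e. it would be a
pseudo-reflection. So `gcd_{k ≠ j} t_{ik}` is prime to `n_i`, and Bézout solves
`∑_{k ≠ j} t_{ik} c_k ≡ 1 (mod n_i)` for each `i` separately. As the `n_i` are pairwise coprime,
the Chinese remainder theorem gives one positive solution `c` for all `i` at once, and `σ_i` scales
`∏_{k ≠ j} X_k ^ c_k` by `ξ_i ^ (∑_{k ≠ j} t_{ik} c_k) = ξ_i`. -/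

open MvPolynomial

set_option synthInstance.maxHeartbeats 1000000
set_option maxHeartbeats 1000000

noncomputable section

variable {K : Type} [Field K] {d : ℕ}

section DiagonalAction

variable {R A ι : Type*} [CommSemiring R] [CommSemiring A] [Algebra R A]
  {τ : A ≃ₐ[R] A} {a : ι → R} {x : ι → A}

theorem AlgEquiv.pow_apply_of_apply_eq_smul_s7 {r : R} {y : A} (h : τ y = r • y) (m : ℕ) :
    (τ ^ m) y = r ^ m • y := by
  induction m with
  | zero => simp
  | succ m ih => rw [pow_succ', AlgEquiv.mul_apply, ih, map_smul, h, smul_smul, ← pow_succ]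

theorem AlgEquiv.map_prod_pow_of_apply_eq_smul (h : ∀ k, τ (x k) = a k • x k)
    (s : Finset ι) (c : ι → ℕ) :
    τ (∏ k ∈ s, x k ^ c k) = (∏ k ∈ s, a k ^ c k) • ∏ k ∈ s, x k ^ c k := by
  simp only [map_prod, map_pow, h, smul_pow, Finset.prod_smul]

end DiagonalAction

theorem Nat.cast_finset_gcd {α : Type*} (s : Finset α) (f : α → ℕ) :
    ((s.gcd f : ℕ) : ℤ) = s.gcd fun k ↦ (f k : ℤ) := by
  classical
  induction s using Finset.induction with
  | empty => simp
  | insert b s hb ih =>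
    rw [Finset.gcd_insert, Finset.gcd_insert, ← ih, ← Int.coe_gcd, Int.gcd_natCast_natCast]
    rfl

theorem ZMod.exists_sum_mul_eq_one {α : Type*} {s : Finset α} {f : α → ℕ} {n : ℕ}
    (h : Nat.Coprime (s.gcd f) n) : ∃ a : α → ZMod n, ∑ k ∈ s, (f k : ZMod n) * a k = 1 := by
  obtain ⟨g, hg⟩ := Finset.gcd_eq_sum_mul s fun k ↦ (f k : ℤ)
  have hunit : ((s.gcd f : ℕ) : ZMod n) * ↑(ZMod.unitOfCoprime _ h)⁻¹ = 1 := by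
    rw [← ZMod.coe_unitOfCoprime _ h, Units.mul_inv]
  refine ⟨fun k ↦ g k * ↑(ZMod.unitOfCoprime _ h)⁻¹, ?_⟩
  have hcast := congrArg (Int.cast : ℤ → ZMod n) hg
  rw [← Nat.cast_finset_gcd] at hcast
  push_cast at hcast
  simp_rw [← mul_assoc, ← Finset.sum_mul, ← hcast, hunit]

theorem ZMod.exists_pos_natCast_eq {ι : Type*} [Fintype ι] {n : ι → ℕ} (hn : ∀ i, 0 < n i)
    (hcop : Pairwise fun i j ↦ Nat.Coprime (n i) (n j)) (x : ∀ i, ZMod (n i)) :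
    ∃ c : ℕ, 0 < c ∧ ∀ i, (c : ZMod (n i)) = x i := by
  have hN : 0 < ∏ i, n i := Finset.prod_pos fun i _ ↦ hn i
  have : NeZero (∏ i, n i) := ⟨hN.ne'⟩
  set y := (ZMod.prodEquivPi n hcop).symm x
  refine ⟨y.val + ∏ i, n i, by omega, fun i ↦ ?_⟩
  have hy := congrFun ((ZMod.prodEquivPi n hcop).apply_symm_apply x) i
  rw [ZMod.prodEquivPi_apply, ZMod.castHom_apply, ZMod.cast_eq_val] at hy
  rw [Nat.cast_add, hy, (ZMod.natCast_eq_zero_iff _ _).mpr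
    (Finset.dvd_prod_of_mem n (Finset.mem_univ i)), add_zero]

theorem IsPrimitiveRoot.pow_eq_self_of_natCast_eq_one {M : Type*} [CommMonoid M] {ξ : M}
    {n m : ℕ} (hξ : IsPrimitiveRoot ξ n) (hm : (m : ZMod n) = 1) : ξ ^ m = ξ := by
  rw [← Nat.cast_one, ZMod.natCast_eq_natCast_iff'] at hm
  calc ξ ^ m = ξ ^ (m % n) := by rw [hξ.eq_orderOf, pow_mod_orderOf]
    _ = ξ := by rw [hm, hξ.eq_orderOf, pow_mod_orderOf, pow_one]

theorem isPseudoReflection_of_apply_X {g : MvPolynomial (Fin d) K ≃ₐ[K] MvPolynomial (Fin d) K}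
    {c : Fin d → K} {j : Fin d} (hg : ∀ k, g (X k) = c k • X k) (hc : ∀ k, c k = 1 ↔ k ≠ j) :
    IsPseudoReflection g := by
  classical
  refine ⟨c, hg, ?_⟩
  rw [Nat.card_congr (Equiv.subtypeEquivRight hc), Nat.card_eq_fintype_card,
    Fintype.card_subtype_compl, Fintype.card_subtype_eq, Fintype.card_fin]

theorem isPseudoReflection_pow_div {τ : MvPolynomial (Fin d) K ≃ₐ[K] MvPolynomial (Fin d) K}
    {ξ : K} {n p : ℕ} {t : Fin d → ℕ} {j : Fin d} (hξ : IsPrimitiveRoot ξ n) (hn : 0 < n)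
    (hτ : ∀ k, τ (X k) = ξ ^ t k • X k) (hpn : p ∣ n) (hpt : ∀ k ≠ j, p ∣ t k)
    (hptj : ¬ p ∣ t j) : IsPseudoReflection (τ ^ (n / p)) := by
  obtain ⟨m, rfl⟩ := hpn
  have hp : 0 < p := Nat.pos_of_mul_pos_right hn
  have hm : 0 < m := Nat.pos_of_mul_pos_left hn
  refine isPseudoReflection_of_apply_X (j := j)
    (fun k ↦ AlgEquiv.pow_apply_of_apply_eq_smul_s7 (hτ k) _) fun k ↦ ?_
  rw [← pow_mul, hξ.pow_eq_one_iff_dvd, Nat.mul_div_cancel_left m hp,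
    Nat.mul_dvd_mul_iff_right hm]
  exact ⟨fun hptk hkj ↦ hptj (hkj ▸ hptk), hpt k⟩

theorem coprime_gcd_erase_of_not_isPseudoReflection_pow
    {τ : MvPolynomial (Fin d) K ≃ₐ[K] MvPolynomial (Fin d) K} {ξ : K} {n : ℕ} {t : Fin d → ℕ}
    (hξ : IsPrimitiveRoot ξ n) (hn : 0 < n) (hτ : ∀ k, τ (X k) = ξ ^ t k • X k)
    (hgcd : Nat.Coprime (Finset.univ.gcd t) n) (hpr : ∀ m, ¬ IsPseudoReflection (τ ^ m))
    (j : Fin d) : Nat.Coprime ((Finset.univ.erase j).gcd t) n := by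
  refine Nat.coprime_of_dvd fun p hp hpg hpn ↦ ?_
  have hpt : ∀ k ≠ j, p ∣ t k := fun k hk ↦ hpg.trans (Finset.gcd_dvd (by simp [hk]))
  refine hpr _ (isPseudoReflection_pow_div hξ hn hτ hpn hpt fun hptj ↦ hp.not_dvd_one ?_)
  refine hgcd ▸ Nat.dvd_gcd (Finset.dvd_gcd fun k _ ↦ ?_) hpn
  by_cases hkj : k = j
  · exact hkj ▸ hptj
  · exact hpt k hkj

theorem statement7_general {ℓ : ℕ}
    (n : Fin ℓ → ℕ) (hn : ∀ i, 0 < n i)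
    (ξ : Fin ℓ → K) (hξ : ∀ i, IsPrimitiveRoot (ξ i) (n i))
    (t : Fin ℓ → Fin d → ℕ)
    (hgcd : ∀ i, Nat.gcd (Finset.univ.gcd (t i)) (n i) = 1)
    (σ : Fin ℓ → (MvPolynomial (Fin d) K ≃ₐ[K] MvPolynomial (Fin d) K))
    (hσ : ∀ i j, σ i (X j) = ξ i ^ t i j • X j)
    (hcop : ∀ i i', i ≠ i' → Nat.Coprime (n i) (n i'))
    (hpr : ∀ g ∈ Ggen σ, ¬ IsPseudoReflection g) :
    ∀ j : Fin d, ∃ c : Fin d → ℕ, (∀ k, k ≠ j → 0 < c k) ∧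
      ∀ i, σ i (∏ k ∈ Finset.univ.erase j, X k ^ c k) =
        ξ i • ∏ k ∈ Finset.univ.erase j, (X k : MvPolynomial (Fin d) K) ^ c k := by
  intro j
  have hsolvable : ∀ i, ∃ a : Fin d → ZMod (n i),
      ∑ k ∈ Finset.univ.erase j, (t i k : ZMod (n i)) * a k = 1 := fun i ↦ by
    have hσ_mem : σ i ∈ Ggen σ := Subgroup.subset_closure (Set.mem_range_self i)
    exact ZMod.exists_sum_mul_eq_one <| coprime_gcd_erase_of_not_isPseudoReflection_pow
      (hξ i) (hn i) (hσ i) (hgcd i) (fun m ↦ hpr _ (pow_mem hσ_mem m)) j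
  choose a ha using hsolvable
  choose c hc_pos hc using fun k ↦ ZMod.exists_pos_natCast_eq hn hcop fun i ↦ a i k
  refine ⟨c, fun k _ ↦ hc_pos k, fun i ↦ ?_⟩
  rw [AlgEquiv.map_prod_pow_of_apply_eq_smul (hσ i)]
  congr 1
  simp_rw [← pow_mul, Finset.prod_pow_eq_pow_sum]
  refine (hξ i).pow_eq_self_of_natCast_eq_one ?_
  push_cast [hc]
  exact ha i

/-- Claim in the proof of Theorem 3.8: if `n_1, …, n_ℓ` are pairwise coprime and `G`
has no pseudo-reflection, then for each `j` there are positive integers `c_k`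
(`k ≠ j`) such that `∏_{k ≠ j} X_k^{c_k}` lies in `R^{(1,1,…,1)}`, the semi-invariants
of the character sending `σ_i` to `ξ_i`. -/
theorem statement7 [IsAlgClosed K] {ℓ : ℕ} (hd : 2 ≤ d) (hℓ : 1 ≤ ℓ)
    (n : Fin ℓ → ℕ) (hn : ∀ i, 0 < n i) (hchar : ∀ i, (n i : K) ≠ 0)
    (ξ : Fin ℓ → K) (hξ : ∀ i, IsPrimitiveRoot (ξ i) (n i))
    (t : Fin ℓ → Fin d → ℕ)
    (hgcd : ∀ i, Nat.gcd (Finset.univ.gcd (t i)) (n i) = 1)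
    (σ : Fin ℓ → (MvPolynomial (Fin d) K ≃ₐ[K] MvPolynomial (Fin d) K))
    (hσ : ∀ i j, σ i (X j) = ξ i ^ t i j • X j)
    (hcop : ∀ i i', i ≠ i' → Nat.Coprime (n i) (n i'))
    (hpr : ∀ g ∈ Ggen σ, ¬ IsPseudoReflection g) :
    ∀ j : Fin d, ∃ c : Fin d → ℕ, (∀ k, k ≠ j → 0 < c k) ∧
      ∀ i, σ i (∏ k ∈ Finset.univ.erase j, X k ^ c k) =
        ξ i • ∏ k ∈ Finset.univ.erase j, (X k : MvPolynomial (Fin d) K) ^ c k :=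
  statement7_general n hn ξ hξ t hgcd σ hσ hcop hpr

end
end

section
/- Under the stated setup, let n = n_1 n_2 ⋯ n_ℓ and let 𝒳 be any character of G. Consider the conditions: (1) for every graded prime ideal p of R^G with p ≠ m_G, the localization (R^𝒳)_p is a free (R^G)_p-module; (2) the ideal (X_1^n, …, X_d^n) of R^G is contained in tr_{R^G}(R^𝒳); (3) for every j with 1 ≤ j ≤ d there exists an integer u_j with 0 < u_j ≤ n such that X_j^{u_j} ∈ R^𝒳. Then (3) implies (2), and (2) implies (1). -/
open MvPolynomial

set_option synthInstance.maxHeartbeats 1000000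
set_option maxHeartbeats 1000000

noncomputable section

variable {K : Type} [Field K] {d : ℕ}

/-- An ideal of `R^G` is graded if, together with each element, it contains all of its
homogeneous components (taken in `R = K[X_1,…,X_d]` with the standard grading). -/
def IsGradedIdeal (G : Subgroup (MvPolynomial (Fin d) K ≃ₐ[K] MvPolynomial (Fin d) K))
    (p : Ideal (invariants G)) : Prop :=
  ∀ a : invariants G, a ∈ p → ∀ k : ℕ, ∀ b : invariants G,
    (b : MvPolynomial (Fin d) K) = homogeneousComponent k (a : MvPolynomial (Fin d) K) →
      b ∈ p

/-- The graded maximal ideal `m_G` of `R^G`: the invariants with zero constant term. -/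
def mG (G : Subgroup (MvPolynomial (Fin d) K ≃ₐ[K] MvPolynomial (Fin d) K)) :
    Ideal (invariants G) :=
  RingHom.ker ((constantCoeff : MvPolynomial (Fin d) K →+* K).comp
    (Subalgebra.val (invariants G)).toRingHom)

/-!
Every element of `G` scales each variable by an `N`-th root of unity. Hence `X_j^N` is invariant,
`G` has exponent `N`, and each monomial occurring in an invariant is itself invariant.

(3) ⇒ (2): multiplication by `X_j^{N - u_j}` maps `R^𝒳` into `R^G` and `X_j^{u_j}` to `X_j^N`.

(2) ⇒ (1): a graded prime `p ≠ m_G` lies inside `m_G`, so it misses some `X_j^N`, for otherwise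
it would contain every invariant monomial of positive degree. Hence `f m ∉ p` for some
`f : R^𝒳 → R^G` and `m ∈ R^𝒳`. As `f x • m = f m • x` for all `x`, multiplication by `m` is an
isomorphism `(R^G)_p ≅ (R^𝒳)_p`.
-/

section TraceIdeal

variable {A M : Type*} [CommRing A] [AddCommGroup M] [Module A M]

theorem apply_mem_traceIdeal (f : M →ₗ[A] A) (m : M) : f m ∈ traceIdeal A M :=
  Ideal.mem_iSup_of_mem f ⟨m, rfl⟩

theorem traceIdeal_le_iff {I : Ideal A} : traceIdeal A M ≤ I ↔ ∀ (f : M →ₗ[A] A) m, f m ∈ I :=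
  ⟨fun h f m => h (apply_mem_traceIdeal f m),
    fun h => iSup_le fun f => by rintro _ ⟨m, rfl⟩; exact h f m⟩

/-- If `f m ∉ p`, then `r ↦ r • m` is an isomorphism `A_p ≃ M_p`, with inverse `x ↦ f x / f m`. -/
theorem free_localizedModule_of_not_traceIdeal_le (p : Ideal A) [p.IsPrime]
    (hrank : ∀ (f : M →ₗ[A] A) (m x : M), f x • m = f m • x) (hp : ¬traceIdeal A M ≤ p) :
    Module.Free (Localization p.primeCompl) (LocalizedModule p.primeCompl M) := by
  obtain ⟨f, m, hfm⟩ : ∃ (f : M →ₗ[A] A) (m : M), f m ∉ p := by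
    by_contra! h
    exact hp (traceIdeal_le_iff.2 h)
  let s : p.primeCompl := ⟨f m, hfm⟩
  let Φ := LinearMap.toSpanSingleton (Localization p.primeCompl)
    (LocalizedModule p.primeCompl M) (LocalizedModule.mk m 1)
  refine Module.Free.of_equiv (LinearEquiv.ofBijective Φ ⟨?_, ?_⟩)
  · rw [← LinearMap.ker_eq_bot, LinearMap.ker_eq_bot']
    intro y hy
    induction y using Localization.induction_on with
    | H y =>
    obtain ⟨a, t⟩ := y
    rw [LinearMap.toSpanSingleton_apply, LocalizedModule.mk_smul_mk, mul_one,
      ← LocalizedModule.zero_mk 1, LocalizedModule.mk_eq, one_smul, smul_zero] at hy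
    obtain ⟨u, hu⟩ := hy
    rw [Localization.mk_eq_mk', IsLocalization.mk'_eq_zero_iff]
    refine ⟨u * s, ?_⟩
    have := congrArg f hu
    simp only [map_smul, map_zero, Submonoid.smul_def, smul_eq_mul] at this
    simp only [Submonoid.coe_mul]
    linear_combination this
  · intro z
    induction z using LocalizedModule.induction_on with
    | h x t =>
    refine ⟨Localization.mk (f x) (t * s), ?_⟩
    rw [LinearMap.toSpanSingleton_apply, LocalizedModule.mk_smul_mk, mul_one, hrank]
    exact LocalizedModule.mk_cancel_common_right t s x

end TraceIdeal

section Diagonal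

variable {ι : Type*}

theorem apply_monomial_of_apply_X {g : MvPolynomial ι K →ₐ[K] MvPolynomial ι K} {c : ι → K}
    (hg : ∀ j, g (X j) = c j • X j) (α : ι →₀ ℕ) (r : K) :
    g (monomial α r) = (α.prod fun j e => c j ^ e) • monomial α r := by
  rw [aeval_unique g, aeval_monomial, monomial_eq]
  simp only [Finsupp.prod, Function.comp_apply, hg, smul_eq_C_mul, mul_pow,
    Finset.prod_mul_distrib, algebraMap_eq, ← map_pow, ← map_prod]
  ring

theorem coeff_apply_of_apply_X {g : MvPolynomial ι K →ₐ[K] MvPolynomial ι K} {c : ι → K}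
    (hg : ∀ j, g (X j) = c j • X j) (a : MvPolynomial ι K) (α : ι →₀ ℕ) :
    coeff α (g a) = (α.prod fun j e => c j ^ e) * coeff α a := by
  classical
  induction a using MvPolynomial.induction_on' with
  | monomial β r =>
    rw [apply_monomial_of_apply_X hg, coeff_smul, coeff_monomial, smul_eq_mul]
    split_ifs with h
    · rw [h]
    · rw [mul_zero, mul_zero]
  | add a b ha hb => rw [map_add, coeff_add, coeff_add, ha, hb, mul_add]

variable (K ι) in
def diagonalSubgroup (N : ℕ) : Subgroup (MvPolynomial ι K ≃ₐ[K] MvPolynomial ι K) where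
  carrier := {g | ∀ j, ∃ c : K, c ^ N = 1 ∧ g (X j) = c • X j}
  mul_mem' {g h} hg hh j := by
    obtain ⟨c, hcN, hc⟩ := hg j
    obtain ⟨c', hc'N, hc'⟩ := hh j
    refine ⟨c' * c, by rw [mul_pow, hcN, hc'N, one_mul], ?_⟩
    rw [AlgEquiv.mul_apply, hc', map_smul, hc, smul_smul]
  one_mem' j := ⟨1, one_pow N, (one_smul K _).symm⟩
  inv_mem' {g} hg j := by
    obtain ⟨c, hcN, hc⟩ := hg j
    have hc0 : c ≠ 0 := by
      rintro rfl
      rw [zero_smul, map_eq_zero_iff _ g.injective] at hc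
      exact X_ne_zero j hc
    refine ⟨c⁻¹, by rw [inv_pow, hcN, inv_one], g.injective ?_⟩
    change g (g.symm (X j)) = _
    rw [g.apply_symm_apply, map_smul, hc, smul_smul, inv_mul_cancel₀ hc0, one_smul]

variable {N : ℕ}

theorem pow_eq_one_of_mem_diagonalSubgroup {g : MvPolynomial ι K ≃ₐ[K] MvPolynomial ι K}
    (hg : g ∈ diagonalSubgroup K ι N) : g ^ N = 1 := by
  refine AlgEquiv.coe_toAlgHom_injective (algHom_ext fun j => ?_)
  obtain ⟨c, hcN, hc⟩ := hg j
  have hpow : ∀ k : ℕ, (g ^ k) (X j) = c ^ k • X j := by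
    intro k
    induction k with
    | zero => rw [pow_zero, pow_zero, one_smul, AlgEquiv.one_apply]
    | succ k ih => rw [pow_succ, AlgEquiv.mul_apply, hc, map_smul, ih, smul_smul, pow_succ']
  change (g ^ N) (X j) = X j
  rw [hpow, hcN, one_smul]

theorem exponentExists_of_le_diagonalSubgroup (hN : 0 < N)
    {G : Subgroup (MvPolynomial ι K ≃ₐ[K] MvPolynomial ι K)} (hG : G ≤ diagonalSubgroup K ι N) :
    Monoid.ExponentExists G :=
  ⟨N, hN, fun g => Subtype.ext (pow_eq_one_of_mem_diagonalSubgroup (hG g.2))⟩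

end Diagonal

theorem Ggen_le_diagonalSubgroup {ℓ N : ℕ} {n : Fin ℓ → ℕ} {ξ : Fin ℓ → K}
    {t : Fin ℓ → Fin d → ℕ} {σ : Fin ℓ → (MvPolynomial (Fin d) K ≃ₐ[K] MvPolynomial (Fin d) K)}
    (hξ : ∀ i, ξ i ^ n i = 1) (hn : ∀ i, n i ∣ N) (hσ : ∀ i j, σ i (X j) = ξ i ^ t i j • X j) :
    Ggen σ ≤ diagonalSubgroup K (Fin d) N := by
  refine Subgroup.closure_le _ |>.2 ?_
  rintro _ ⟨i, rfl⟩ j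
  obtain ⟨k, rfl⟩ := hn i
  exact ⟨ξ i ^ t i j, by rw [← pow_mul, mul_comm, pow_mul, pow_mul, hξ, one_pow, one_pow], hσ i j⟩

section Invariants

variable {G : Subgroup (MvPolynomial (Fin d) K ≃ₐ[K] MvPolynomial (Fin d) K)} {N : ℕ}

theorem X_pow_mem_invariants (hG : G ≤ diagonalSubgroup K (Fin d) N) (j : Fin d) :
    X j ^ N ∈ invariants G := by
  intro g hg
  obtain ⟨c, hcN, hc⟩ := hG hg j
  rw [map_pow, hc, smul_pow, hcN, one_smul]

theorem monomial_mem_invariants_of_mem_support (hG : G ≤ diagonalSubgroup K (Fin d) N)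
    {a : MvPolynomial (Fin d) K} (ha : a ∈ invariants G) {α : Fin d →₀ ℕ} (hα : α ∈ a.support)
    (r : K) : monomial α r ∈ invariants G := by
  intro g hg
  choose c _ hc using hG hg
  have hcoeff : coeff α (g a) = (α.prod fun j e => c j ^ e) * coeff α a :=
    coeff_apply_of_apply_X (g := (g : MvPolynomial (Fin d) K →ₐ[K] _)) hc a α
  rw [ha g hg, eq_comm, mul_eq_right₀ (mem_support_iff.1 hα)] at hcoeff
  have hmon : g (monomial α r) = (α.prod fun j e => c j ^ e) • monomial α r :=
    apply_monomial_of_apply_X (g := (g : MvPolynomial (Fin d) K →ₐ[K] _)) hc α r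
  rw [hmon, hcoeff, one_smul]

end Invariants

section SemiInvariants

variable {G : Subgroup (MvPolynomial (Fin d) K ≃ₐ[K] MvPolynomial (Fin d) K)} {χ : G →* Kˣ}

theorem mul_mem_invariants_of_mul_mem {a m y : MvPolynomial (Fin d) K}
    (hm : m ∈ semiInvariants G χ) (hm0 : m ≠ 0) (ham : a * m ∈ invariants G)
    (hy : y ∈ semiInvariants G χ) : a * y ∈ invariants G := by
  intro g hg
  refine mul_right_cancel₀ hm0 ?_
  calc g (a * y) * m = g a * ((χ ⟨g, hg⟩ : K) • m) * y := by
        rw [map_mul, hy ⟨g, hg⟩, smul_eq_C_mul, smul_eq_C_mul]; ring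
    _ = a * y * m := by rw [← hm ⟨g, hg⟩, ← map_mul, ham g hg]; ring

theorem pow_mem_invariants_of_mem_semiInvariants {N : ℕ} (hN : ∀ g : G, g ^ N = 1)
    {m : MvPolynomial (Fin d) K} (hm : m ∈ semiInvariants G χ) : m ^ N ∈ invariants G := by
  intro g hg
  rw [map_pow, hm ⟨g, hg⟩, smul_pow, ← Units.val_pow_eq_pow_val, ← map_pow, hN, map_one,
    Units.val_one, one_smul]

theorem mem_traceIdeal_of_coe_eq_mul {a m : MvPolynomial (Fin d) K}
    (hm : m ∈ semiInvariants G χ) (hm0 : m ≠ 0) {b : invariants G} (hb : (b : _) = a * m) :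
    b ∈ traceIdeal (invariants G) (semiInvariants G χ) := by
  have ha : ∀ y ∈ semiInvariants G χ, a * y ∈ invariants G :=
    fun y => mul_mem_invariants_of_mul_mem hm hm0 (hb ▸ b.2)
  let f : semiInvariants G χ →ₗ[invariants G] invariants G :=
    { toFun y := ⟨a * y, ha y y.2⟩
      map_add' y z := Subtype.ext (mul_add a y z)
      map_smul' s y := Subtype.ext (mul_left_comm a s y) }
  convert apply_mem_traceIdeal (A := invariants G) (M := semiInvariants G χ) f ⟨m, hm⟩
  exact Subtype.ext hb

/-- With `N` an exponent of `G`, `x / m = (m ^ (N - 1) * x) / m ^ N` is a ratio of invariants. -/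
theorem apply_smul_eq_apply_smul (hG : Monoid.ExponentExists G)
    (f : semiInvariants G χ →ₗ[invariants G] invariants G) (m x : semiInvariants G χ) :
    f x • m = f m • x := by
  obtain rfl | hm0 := eq_or_ne m 0
  · simp
  have hm0' : (m : MvPolynomial (Fin d) K) ≠ 0 := by simpa using hm0
  obtain ⟨N, hN0, hN⟩ := hG
  have hmN : (m : MvPolynomial (Fin d) K) ^ (N - 1) * m ∈ invariants G := by
    rw [← pow_succ, Nat.sub_add_cancel hN0]
    exact pow_mem_invariants_of_mem_semiInvariants hN m.2
  have hx := mul_mem_invariants_of_mul_mem m.2 hm0' hmN x.2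
  have hsmul : (⟨_, hmN⟩ : invariants G) • x = (⟨_, hx⟩ : invariants G) • m :=
    Subtype.ext (mul_right_comm _ _ _)
  have hf := congrArg (fun y => (f y : MvPolynomial (Fin d) K)) hsmul
  simp only [map_smul, smul_eq_mul, Subalgebra.coe_mul] at hf
  refine Subtype.ext (mul_left_cancel₀ (pow_ne_zero (N - 1) hm0') ?_)
  change _ * ((f x : MvPolynomial (Fin d) K) * m) = _ * ((f m : MvPolynomial (Fin d) K) * x)
  linear_combination hf

end SemiInvariants

section Graded

variable {G : Subgroup (MvPolynomial (Fin d) K ≃ₐ[K] MvPolynomial (Fin d) K)}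

theorem le_mG_of_isGradedIdeal {p : Ideal (invariants G)} (hp : p ≠ ⊤)
    (hgr : IsGradedIdeal G p) : p ≤ mG G := by
  intro a ha
  by_contra h0
  have hunit : IsUnit (algebraMap K (invariants G) (constantCoeff (a : MvPolynomial (Fin d) K))) :=
    (isUnit_iff_ne_zero.2 h0).map _
  refine hp (p.eq_top_of_isUnit_mem (hgr a ha 0 _ ?_) hunit)
  rw [homogeneousComponent_zero, ← constantCoeff_eq]
  rfl

/-- An invariant monomial `x^α` with `α ≠ 0` lies in `p`: its `N`-th power is `∏ⱼ (X_j^N)^{α_j}`. -/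
theorem mG_le_of_X_pow_mem {N : ℕ} (hG : G ≤ diagonalSubgroup K (Fin d) N)
    {p : Ideal (invariants G)} [p.IsPrime]
    (hX : ∀ j, (⟨X j ^ N, X_pow_mem_invariants hG j⟩ : invariants G) ∈ p) : mG G ≤ p := by
  have hmonomial : ∀ α : Fin d →₀ ℕ, α ≠ 0 → ∀ h : monomial α (1 : K) ∈ invariants G,
      (⟨_, h⟩ : invariants G) ∈ p := by
    intro α hα h
    obtain ⟨j, hj⟩ := Finsupp.ne_iff.1 hα
    have hpow : (⟨_, h⟩ : invariants G) ^ N = ∏ i, ⟨X i ^ N, X_pow_mem_invariants hG i⟩ ^ α i := by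
      apply Subtype.ext
      simp [monomial_eq, Finsupp.prod_fintype, ← Finset.prod_pow, ← pow_mul, mul_comm]
    refine ‹p.IsPrime›.mem_of_pow_mem N ?_
    rw [hpow, Ideal.IsPrime.prod_mem_iff]
    exact ⟨j, Finset.mem_univ j, p.pow_mem_of_mem (hX j) _ (Nat.pos_of_ne_zero hj)⟩
  intro a ha
  have hmem := fun α (hα : α ∈ (a : MvPolynomial (Fin d) K).support) =>
    monomial_mem_invariants_of_mem_support hG a.2 hα 1
  have hsum : a = ∑ α ∈ (a : MvPolynomial (Fin d) K).support.attach,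
      coeff α.1 (a : MvPolynomial (Fin d) K) • (⟨_, hmem α.1 α.2⟩ : invariants G) := by
    apply Subtype.ext
    rw [AddSubmonoidClass.coe_finsetSum]
    simp only [Subalgebra.coe_smul]
    rw [Finset.sum_attach _ (fun α => coeff α (a : MvPolynomial (Fin d) K) • monomial α (1 : K))]
    conv_lhs => rw [(a : MvPolynomial (Fin d) K).as_sum]
    simp only [smul_monomial, smul_eq_mul, mul_one]
  rw [hsum]
  refine p.sum_mem fun α _ => p.smul_of_tower_mem _ (hmonomial α.1 ?_ _)
  intro h0
  exact mem_support_iff.1 (h0 ▸ α.2) ha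

theorem exists_X_pow_notMem_of_isGradedIdeal {N : ℕ} (hG : G ≤ diagonalSubgroup K (Fin d) N)
    {p : Ideal (invariants G)} [p.IsPrime] (hgr : IsGradedIdeal G p) (hne : p ≠ mG G) :
    ∃ j, (⟨X j ^ N, X_pow_mem_invariants hG j⟩ : invariants G) ∉ p := by
  by_contra! h
  exact hne <| le_antisymm (le_mG_of_isGradedIdeal Ideal.IsPrime.ne_top' hgr)
    (mG_le_of_X_pow_mem hG h)

end Graded

theorem statement9_general {ℓ : ℕ}
    (n : Fin ℓ → ℕ) (hn : ∀ i, 0 < n i)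
    (ξ : Fin ℓ → K) (hξ : ∀ i, IsPrimitiveRoot (ξ i) (n i))
    (t : Fin ℓ → Fin d → ℕ)
    (σ : Fin ℓ → (MvPolynomial (Fin d) K ≃ₐ[K] MvPolynomial (Fin d) K))
    (hσ : ∀ i j, σ i (X j) = ξ i ^ t i j • X j)
    (N : ℕ) (hN : N = ∏ i, n i)
    (χ : Ggen σ →* Kˣ) :
    ((∀ j : Fin d, ∃ u : ℕ, 0 < u ∧ u ≤ N ∧
        (X j : MvPolynomial (Fin d) K) ^ u ∈ semiInvariants (Ggen σ) χ) →
      Ideal.span {x : invariants (Ggen σ) |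
          ∃ j : Fin d, (x : MvPolynomial (Fin d) K) = X j ^ N} ≤
        traceIdeal (invariants (Ggen σ)) (semiInvariants (Ggen σ) χ)) ∧
    ((Ideal.span {x : invariants (Ggen σ) |
          ∃ j : Fin d, (x : MvPolynomial (Fin d) K) = X j ^ N} ≤
        traceIdeal (invariants (Ggen σ)) (semiInvariants (Ggen σ) χ)) →
      ∀ (p : Ideal (invariants (Ggen σ))) [p.IsPrime],
        IsGradedIdeal (Ggen σ) p → p ≠ mG (Ggen σ) →
          Module.Free (Localization p.primeCompl)
            (LocalizedModule p.primeCompl (semiInvariants (Ggen σ) χ))) := by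
  have hG : Ggen σ ≤ diagonalSubgroup K (Fin d) N :=
    Ggen_le_diagonalSubgroup (fun i => (hξ i).pow_eq_one)
      (fun i => hN ▸ Finset.dvd_prod_of_mem n (Finset.mem_univ i)) hσ
  refine ⟨fun h3 => Ideal.span_le.2 ?_, fun h2 p _ hgr hne => ?_⟩
  · rintro x ⟨j, hxj⟩
    obtain ⟨u, -, huN, hu⟩ := h3 j
    refine mem_traceIdeal_of_coe_eq_mul (a := X j ^ (N - u)) hu (pow_ne_zero u (X_ne_zero j)) ?_
    rw [hxj, ← pow_add, Nat.sub_add_cancel huN]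
  · have hN0 : 0 < N := hN ▸ Finset.prod_pos fun i _ => hn i
    obtain ⟨j, hj⟩ := exists_X_pow_notMem_of_isGradedIdeal hG hgr hne
    exact free_localizedModule_of_not_traceIdeal_le p
      (apply_smul_eq_apply_smul (exponentExists_of_le_diagonalSubgroup hN0 hG))
      fun hle => hj (hle (h2 (Ideal.subset_span ⟨j, rfl⟩)))

/-- Theorem 3.11, implications (3) ⇒ (2) ⇒ (1): with `n = n_1 ⋯ n_ℓ`,
(3) every variable has a power `X_j^{u_j}` (`0 < u_j ≤ n`) lying in `R^𝒳`, implies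
(2) the ideal `(X_1^n, …, X_d^n)` of `R^G` is contained in `tr_{R^G}(R^𝒳)`, implies
(1) `R^𝒳` is locally free on the graded spectrum of `R^G` minus `m_G`. -/
theorem statement9 [IsAlgClosed K] {ℓ : ℕ} (hd : 2 ≤ d) (hℓ : 1 ≤ ℓ)
    (n : Fin ℓ → ℕ) (hn : ∀ i, 0 < n i) (hchar : ∀ i, (n i : K) ≠ 0)
    (ξ : Fin ℓ → K) (hξ : ∀ i, IsPrimitiveRoot (ξ i) (n i))
    (t : Fin ℓ → Fin d → ℕ)
    (hgcd : ∀ i, Nat.gcd (Finset.univ.gcd (t i)) (n i) = 1)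
    (σ : Fin ℓ → (MvPolynomial (Fin d) K ≃ₐ[K] MvPolynomial (Fin d) K))
    (hσ : ∀ i j, σ i (X j) = ξ i ^ t i j • X j)
    (N : ℕ) (hN : N = ∏ i, n i)
    (χ : Ggen σ →* Kˣ) :
    ((∀ j : Fin d, ∃ u : ℕ, 0 < u ∧ u ≤ N ∧
        (X j : MvPolynomial (Fin d) K) ^ u ∈ semiInvariants (Ggen σ) χ) →
      Ideal.span {x : invariants (Ggen σ) |
          ∃ j : Fin d, (x : MvPolynomial (Fin d) K) = X j ^ N} ≤
        traceIdeal (invariants (Ggen σ)) (semiInvariants (Ggen σ) χ)) ∧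
    ((Ideal.span {x : invariants (Ggen σ) |
          ∃ j : Fin d, (x : MvPolynomial (Fin d) K) = X j ^ N} ≤
        traceIdeal (invariants (Ggen σ)) (semiInvariants (Ggen σ) χ)) →
      ∀ (p : Ideal (invariants (Ggen σ))) [p.IsPrime],
        IsGradedIdeal (Ggen σ) p → p ≠ mG (Ggen σ) →
          Module.Free (Localization p.primeCompl)
            (LocalizedModule p.primeCompl (semiInvariants (Ggen σ) χ))) :=
  statement9_general n hn ξ hξ t σ hσ N hN χ

end
end
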